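/- arXiv:1704.00636 — 3 statements merged into one kernel-verified Lean document; each statement's English description precedes it below -/
import Mathlib

section
/- Any vector in ℝ^n with positive coordinates can be approximated arbitrarily well (in the sup norm) by vectors that are positive real multiples of vectors with pairwise coprime positive integer coordinates. -/
private lemma stmt_1_aux (m : ℕ) (f : Fin m → ℕ) (hf : Function.Injective f) :
    ∃ B : ℕ, 0 < B ∧ ∀ i j : Fin m, i ≠ j → ((f i : ℤ) - f j) ∣ (B : ℤ) := by
  refine ⟨∏ p ∈ Finset.univ.offDiag, ((f p.1 : ℤ) - (f p.2 : ℤ)).natAbs, ?_, ?_⟩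
  · apply Finset.prod_pos
    intro p hp
    rw [Finset.mem_offDiag] at hp
    have hne : f p.1 ≠ f p.2 := fun h => hp.2.2 (hf h)
    have : ((f p.1 : ℤ) - (f p.2 : ℤ)) ≠ 0 := sub_ne_zero.mpr (by exact_mod_cast hne)
    exact Int.natAbs_pos.mpr this
  · intro i j hij
    have hm : ((i, j) : Fin m × Fin m) ∈ Finset.univ.offDiag :=
      Finset.mem_offDiag.mpr ⟨Finset.mem_univ _, Finset.mem_univ _, hij⟩
    have hd : ((f i : ℤ) - f j).natAbs ∣
        ∏ p ∈ Finset.univ.offDiag, ((f p.1 : ℤ) - (f p.2 : ℤ)).natAbs :=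
      Finset.dvd_prod_of_mem (fun p => ((f p.1 : ℤ) - f p.2).natAbs) hm
    exact Int.natAbs_dvd.mp (Int.natCast_dvd_natCast.mpr hd)

/-- Any vector in ℝⁿ with positive coordinates can be approximated arbitrarily well
(in the sup norm) by positive real multiples of vectors with pairwise coprime
positive integer coordinates. -/
theorem stmt_1 (n : ℕ) (x : Fin n → ℝ) (hx : ∀ i, 0 < x i) (ε : ℝ) (hε : 0 < ε) :
    ∃ (a : Fin n → ℕ) (t : ℝ), (∀ i, 0 < a i) ∧
      (∀ i j, i ≠ j → Nat.Coprime (a i) (a j)) ∧ 0 < t ∧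
      ∀ i, |t * (a i : ℝ) - x i| ≤ ε := by
  rcases Nat.eq_zero_or_pos n with hn | hn
  · subst hn
    exact ⟨fun i => 1, 1, fun i => i.elim0, fun i => i.elim0, one_pos, fun i => i.elim0⟩
  set T : ℝ := 3 / ε with hTdef
  have hT : 0 < T := by positivity
  set K : Fin n → ℕ := fun i => ⌊T * x i⌋₊ + 1 with hKdef
  set c : Fin n → ℕ := fun i => n * K i + i + 1 with hcdef
  have hcinj : Function.Injective c := by
    intro i j h
    simp only [hcdef] at h
    have hij : i.val < n := i.isLt
    have hji : j.val < n := j.isLt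
    have hK' : K i = K j := by
      rcases lt_trichotomy (K i) (K j) with hlt | heq | hgt
      · have : n * (K i + 1) ≤ n * K j := Nat.mul_le_mul_left n hlt
        simp [Nat.mul_add] at this; omega
      · exact heq
      · have : n * (K j + 1) ≤ n * K i := Nat.mul_le_mul_left n hgt
        simp [Nat.mul_add] at this; omega
    rw [hK'] at h
    have : i.val = j.val := by omega
    exact Fin.ext this
  obtain ⟨B, hB, hdvd⟩ := stmt_1_aux n c hcinj
  set a : Fin n → ℕ := fun i => c i * B + 1 with hadef
  have hapos : ∀ i, 0 < a i := fun i => Nat.succ_pos _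
  have hcop : ∀ i j, i ≠ j → Nat.Coprime (a i) (a j) := by
    intro i j hij
    have hAB : ∀ k, Nat.Coprime (a k) (B ^ 2) := by
      intro k
      have h2 : Nat.Coprime (a k) B := by
        have h1 : Nat.Coprime (1 + c k * B) B :=
          (Nat.coprime_add_mul_right_left 1 B (c k)).mpr (Nat.coprime_one_left B)
        simp only [hadef]; rw [add_comm]; exact h1
      exact h2.pow_right 2
    set g := Nat.gcd (a i) (a j) with hg
    have hgi : g ∣ a i := Nat.gcd_dvd_left _ _
    have hgj : g ∣ a j := Nat.gcd_dvd_right _ _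
    have hsub : (g : ℤ) ∣ ((c i : ℤ) - c j) * B := by
      have hd : (g : ℤ) ∣ (a i : ℤ) - (a j : ℤ) :=
        dvd_sub (Int.natCast_dvd_natCast.mpr hgi) (Int.natCast_dvd_natCast.mpr hgj)
      have he : (a i : ℤ) - (a j : ℤ) = ((c i : ℤ) - c j) * B := by
        simp only [hadef]; push_cast; ring
      rwa [he] at hd
    have hB2 : (g : ℤ) ∣ (B : ℤ) ^ 2 := by
      refine hsub.trans ?_
      have h := hdvd i j hij
      calc ((c i : ℤ) - c j) * B ∣ (B : ℤ) * B := mul_dvd_mul_right h B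
        _ = (B : ℤ) ^ 2 := (sq (B : ℤ)).symm
    have hB2' : g ∣ B ^ 2 := by exact_mod_cast hB2
    have hone : g ∣ 1 := (hAB i) ▸ Nat.dvd_gcd hgi hB2'
    exact Nat.dvd_one.mp hone
  set t : ℝ := 1 / ((n : ℝ) * T * B) with htdef
  have hN : (1 : ℝ) ≤ (n : ℝ) := by exact_mod_cast hn
  have hB1 : (1 : ℝ) ≤ (B : ℝ) := by exact_mod_cast hB
  have hprod : (0 : ℝ) < (n : ℝ) * T * B := by positivity
  have ht : 0 < t := by positivity
  refine ⟨a, t, hapos, hcop, ht, ?_⟩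
  intro i
  have hK1 : T * x i < (K i : ℝ) := by
    have := Nat.lt_floor_add_one (T * x i)
    simp only [hKdef]; push_cast; linarith
  have hK2 : (K i : ℝ) ≤ T * x i + 1 := by
    have h0 : (0 : ℝ) ≤ T * x i := le_of_lt (mul_pos hT (hx i))
    have := Nat.floor_le h0
    simp only [hKdef]; push_cast; linarith
  have hi1 : (i : ℝ) + 1 ≤ (n : ℝ) := by exact_mod_cast i.isLt
  have hcR : (c i : ℝ) = (n : ℝ) * K i + i + 1 := by
    simp only [hcdef]; push_cast; ring
  have hta : t * (a i : ℝ) = ((c i : ℝ) * B + 1) / ((n : ℝ) * T * B) := by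
    simp only [hadef, htdef]; push_cast; field_simp
  have hεT : ε * T = 3 := by
    rw [hTdef]; field_simp
  rw [abs_le]
  constructor
  · have hxle : x i ≤ t * (a i : ℝ) := by
      rw [hta, le_div_iff₀ hprod]
      have hBpos : (0 : ℝ) < B := by linarith
      nlinarith [mul_le_mul_of_nonneg_right hK1.le (mul_pos (lt_of_lt_of_le one_pos hN) hBpos).le,
        hx i, mul_pos hT (hx i)]
    linarith
  · rw [hta, sub_le_iff_le_add, div_le_iff₀ hprod]
    have hBpos : (0 : ℝ) < B := by linarith
    have h1 : (0 : ℝ) ≤ (T * x i + 1 - K i) := by linarith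
    have h2 : (0 : ℝ) ≤ (n : ℝ) - ((i : ℝ) + 1) := by linarith
    have h3 : ε * ((n : ℝ) * T * B) = 3 * ((n : ℝ) * B) := by
      calc ε * ((n : ℝ) * T * B) = (ε * T) * ((n : ℝ) * B) := by ring
        _ = 3 * ((n : ℝ) * B) := by rw [hεT]
    have h4 : (1 : ℝ) ≤ (n : ℝ) * B := by nlinarith
    nlinarith [mul_nonneg (mul_nonneg h1 (by linarith : (0:ℝ) ≤ (n:ℝ))) hBpos.le,
      mul_nonneg h2 hBpos.le, h3, h4, hcR]
end

section
/- Assuming the Hoheisel theorem (there exist 0 < ϑ < 1 and l₀ such that every interval (l, l+l^ϑ) with l ≥ l₀ contains a prime), for any rationals 0 < y₁ < y₂ < … < yₙ there exist arbitrarily large N ∈ ℕ such that the intervals (N·yᵢ, N·yᵢ + (N·yᵢ)^ϑ), i = 1,…,n, are pairwise disjoint and each contains a prime; in particular these primes are pairwise distinct. -/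
open Filter

private lemma aux_ev (ϑ : ℝ) (hϑ1 : ϑ < 1) (a b : ℝ) (ha : 0 ≤ a) (hb : 0 < b) :
    ∀ᶠ k : ℕ in atTop, ((k : ℝ) * a) ^ ϑ ≤ (k : ℝ) * b := by
  have h := tendsto_rpow_atTop (show (0:ℝ) < 1 - ϑ by linarith)
  have h2 := (h.comp tendsto_natCast_atTop_atTop).eventually_ge_atTop (a ^ ϑ / b)
  filter_upwards [h2, Filter.eventually_ge_atTop 1] with k hk hk1
  have hk0 : (0:ℝ) < (k:ℝ) := by exact_mod_cast Nat.lt_of_lt_of_le Nat.zero_lt_one hk1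
  have h3 : a ^ ϑ ≤ (k:ℝ) ^ (1 - ϑ) * b := by
    rw [div_le_iff₀ hb] at hk; simpa using hk
  calc ((k:ℝ) * a) ^ ϑ = (k:ℝ) ^ ϑ * a ^ ϑ := Real.mul_rpow hk0.le ha
    _ ≤ (k:ℝ) ^ ϑ * ((k:ℝ) ^ (1 - ϑ) * b) := by
        apply mul_le_mul_of_nonneg_left h3 (Real.rpow_nonneg hk0.le ϑ)
    _ = (k:ℝ) ^ (ϑ + (1 - ϑ)) * b := by rw [Real.rpow_add hk0]; ring
    _ = (k:ℝ) * b := by norm_num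

/-- Assuming the Hoheisel theorem, for pairwise distinct positive rationals
0 < y₁ < … < yₙ there exist arbitrarily large N such that the intervals
(N yᵢ, N yᵢ + (N yᵢ)^ϑ) are pairwise disjoint and each contains a prime;
in particular these primes are pairwise distinct. -/
theorem stmt_2 (ϑ : ℝ) (hϑ0 : 0 < ϑ) (hϑ1 : ϑ < 1) (l₀ : ℕ)
    (hoheisel : ∀ l : ℕ, l₀ ≤ l →
      ∃ p : ℕ, p.Prime ∧ (l : ℝ) < p ∧ (p : ℝ) < (l : ℝ) + (l : ℝ) ^ ϑ)
    (n : ℕ) (y : Fin n → ℚ) (hy : ∀ i, 0 < y i) (hmono : StrictMono y) :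
    ∀ N₀ : ℕ, ∃ N : ℕ, N₀ ≤ N ∧
      (∀ i j : Fin n, i ≠ j →
        Disjoint
          (Set.Ioo ((N : ℝ) * (y i : ℝ)) ((N : ℝ) * (y i : ℝ) + ((N : ℝ) * (y i : ℝ)) ^ ϑ))
          (Set.Ioo ((N : ℝ) * (y j : ℝ)) ((N : ℝ) * (y j : ℝ) + ((N : ℝ) * (y j : ℝ)) ^ ϑ))) ∧
      ∃ p : Fin n → ℕ, Function.Injective p ∧ ∀ i, (p i).Prime ∧
        (p i : ℝ) ∈
          Set.Ioo ((N : ℝ) * (y i : ℝ)) ((N : ℝ) * (y i : ℝ) + ((N : ℝ) * (y i : ℝ)) ^ ϑ) := by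
  intro N₀
  -- common denominator
  set D : ℕ := ∏ i : Fin n, (y i).den with hD
  have hDpos : 0 < D := Finset.prod_pos fun i _ => (y i).pos
  have hdenD : ∀ i, (y i).den ∣ D := fun i =>
    Finset.dvd_prod_of_mem (fun i => (y i).den) (Finset.mem_univ i)
  -- integer values l i k = (D*k) * y i
  set l : Fin n → ℕ → ℕ := fun i k => k * (D / (y i).den) * (y i).num.toNat with hl
  have hnum : ∀ i, (0:ℤ) < (y i).num := fun i => Rat.num_pos.mpr (hy i)
  have hcast : ∀ i k, ((l i k : ℝ)) = ((D * k : ℕ) : ℝ) * ((y i : ℝ)) := by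
    intro i k
    have hden0 : ((y i).den : ℚ) ≠ 0 := Nat.cast_ne_zero.mpr (y i).pos.ne'
    have hmul : (y i) * ((y i).den : ℚ) = ((y i).num : ℚ) := by
      nth_rewrite 1 [← Rat.num_div_den (y i)]
      exact div_mul_cancel₀ _ hden0
    have hnum' : ((y i).num.toNat : ℚ) = ((y i).num : ℚ) := by
      exact_mod_cast Int.toNat_of_nonneg (hnum i).le
    have hq : ((l i k : ℚ)) = ((D * k : ℕ) : ℚ) * (y i) := by
      rw [hl]
      push_cast [hnum', Nat.cast_div (hdenD i) hden0]
      field_simp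
      linear_combination (-(k : ℚ)) * hmul
    exact_mod_cast hq
  have hlge : ∀ i k, k ≤ l i k := by
    intro i k
    have h1 : 1 ≤ D / (y i).den := Nat.one_le_div_iff (y i).pos |>.mpr (Nat.le_of_dvd hDpos (hdenD i))
    have h2 : 1 ≤ (y i).num.toNat := by
      have := hnum i; omega
    calc k = k * 1 * 1 := by ring
      _ ≤ k * (D / (y i).den) * (y i).num.toNat := by
          exact Nat.mul_le_mul (Nat.mul_le_mul_left k h1) h2
  -- eventual disjointness inequality
  have hE : ∀ᶠ k : ℕ in atTop, ∀ q : Fin n × Fin n, q.1 < q.2 →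
      ((k : ℝ) * ((D:ℝ) * (y q.1 : ℝ))) ^ ϑ ≤ (k : ℝ) * ((D:ℝ) * ((y q.2 : ℝ) - (y q.1 : ℝ))) := by
    rw [Filter.eventually_all]
    intro q
    by_cases hq : q.1 < q.2
    · have hgap : (0:ℝ) < (D:ℝ) * ((y q.2 : ℝ) - (y q.1 : ℝ)) := by
        have := hmono hq
        have hD1 : (0:ℝ) < (D:ℝ) := Nat.cast_pos.mpr hDpos
        have : (y q.1 : ℝ) < (y q.2 : ℝ) := by exact_mod_cast this
        nlinarith
      have ha : (0:ℝ) ≤ (D:ℝ) * (y q.1 : ℝ) := by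
        have : (0:ℝ) ≤ (y q.1 : ℝ) := by exact_mod_cast (hy q.1).le
        positivity
      filter_upwards [aux_ev ϑ hϑ1 _ _ ha hgap] with k hk using fun _ => hk
    · exact Filter.Eventually.of_forall fun k h => absurd h hq
  obtain ⟨k, hk⟩ := (hE.and (Filter.eventually_ge_atTop (max l₀ N₀))).exists
  obtain ⟨hkE, hkge⟩ := hk
  have key : ∀ i j : Fin n, i < j →
        ((D * k : ℕ):ℝ) * (y i : ℝ) + (((D * k : ℕ):ℝ) * (y i : ℝ)) ^ ϑ ≤ ((D * k : ℕ):ℝ) * (y j : ℝ) := by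
    intro i j hij
    have h := hkE (i, j) hij
    have e1 : ((D * k : ℕ):ℝ) * (y i : ℝ) = (k : ℝ) * ((D:ℝ) * (y i : ℝ)) := by push_cast; ring
    have e2 : ((D * k : ℕ):ℝ) * (y j : ℝ) = (k : ℝ) * ((D:ℝ) * (y j : ℝ)) := by push_cast; ring
    rw [e1, e2]
    have he : (k : ℝ) * ((D:ℝ) * ((y j : ℝ) - (y i : ℝ)))
        = (k : ℝ) * ((D:ℝ) * (y j : ℝ)) - (k : ℝ) * ((D:ℝ) * (y i : ℝ)) := by ring
    rw [he] at h
    linarith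
  have disj : ∀ i j : Fin n, i < j →
        Disjoint
          (Set.Ioo (((D*k:ℕ) : ℝ) * (y i : ℝ)) (((D*k:ℕ) : ℝ) * (y i : ℝ) + (((D*k:ℕ) : ℝ) * (y i : ℝ)) ^ ϑ))
          (Set.Ioo (((D*k:ℕ) : ℝ) * (y j : ℝ)) (((D*k:ℕ) : ℝ) * (y j : ℝ) + (((D*k:ℕ) : ℝ) * (y j : ℝ)) ^ ϑ)) := by
    intro i j hij
    apply Set.disjoint_left.mpr
    intro x hx hx'
    have := key i j hij
    exact absurd hx'.1 (not_lt.mpr (le_trans hx.2.le this))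
  have hdisj : ∀ i j : Fin n, i ≠ j →
      Disjoint
        (Set.Ioo (((D*k:ℕ) : ℝ) * (y i : ℝ)) (((D*k:ℕ) : ℝ) * (y i : ℝ) + (((D*k:ℕ) : ℝ) * (y i : ℝ)) ^ ϑ))
        (Set.Ioo (((D*k:ℕ) : ℝ) * (y j : ℝ)) (((D*k:ℕ) : ℝ) * (y j : ℝ) + (((D*k:ℕ) : ℝ) * (y j : ℝ)) ^ ϑ)) := by
    intro i j hij
    rcases lt_or_gt_of_ne hij with h | h
    · exact disj i j h
    · exact (disj j i h).symm
  refine ⟨D * k, ?_, hdisj, ?_⟩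
  · calc N₀ ≤ k := le_trans (le_max_right _ _) hkge
      _ ≤ D * k := Nat.le_mul_of_pos_left k hDpos
  · have hl₀ : ∀ i, l₀ ≤ l i k := fun i =>
      le_trans (le_trans (le_max_left _ _) hkge) (hlge i k)
    choose p hp hplo hphi using fun i => hoheisel (l i k) (hl₀ i)
    have hmem : ∀ i, (p i : ℝ) ∈ Set.Ioo (((D*k:ℕ) : ℝ) * (y i : ℝ))
        (((D*k:ℕ) : ℝ) * (y i : ℝ) + (((D*k:ℕ) : ℝ) * (y i : ℝ)) ^ ϑ) := by
      intro i
      constructor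
      · rw [← hcast i k]; exact hplo i
      · rw [← hcast i k]; exact hphi i
    refine ⟨p, ?_, fun i => ⟨hp i, hmem i⟩⟩
    intro i j hpij
    by_contra hij
    have h1 := hmem i
    have h2 := hmem j
    rw [show ((p i : ℝ)) = ((p j : ℝ)) by exact_mod_cast congrArg (Nat.cast : ℕ → ℝ) hpij] at h1
    exact Set.disjoint_left.mp (hdisj i j hij) h1 h2
end

section
/- In degree 2 cohomology of weighted projective space: if a₀,…,aₙ are pairwise coprime positive integers and α₁ ∈ H²(ℂPⁿ(a);ℤ) is the generator mapped under the pullback by [z₀:…:zₙ] ↦ [z₀^{a₀}:…:zₙ^{aₙ}] to ⟨a⟩ times the standard generator of H²(ℂPⁿ;ℤ), then ⟨α₁ⁿ, [ℂPⁿ(a)]⟩ = ⟨a⟩^{n−1}, where ⟨a⟩ = a₀·a₁⋯aₙ. -/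
/-- Degree-2 cohomology of weighted projective space ℂPⁿ(a), a₀,…,aₙ pairwise
coprime positive integers: modelled algebraically, the cohomology ring of ℂPⁿ(a)
(with degree-2i groups ≅ ℤ generated by αᵢ) maps by an injective ring homomorphism φ
(the pullback under [z₀:…:zₙ] ↦ [z₀^{a₀}:…:zₙ^{aₙ}]) to the cohomology ring of ℂPⁿ
(with generators hᵢ, hᵢhⱼ = h_{i+j}), with φ(αᵢ) = ⟨a⟩·hᵢ where ⟨a⟩ = a₀⋯aₙ.
Then the evaluation of α₁ⁿ on the fundamental class (which evaluates αₙ to 1)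
equals ⟨a⟩^{n−1}. -/
theorem stmt_5 (n : ℕ) (hn : 1 ≤ n) (a : Fin (n + 1) → ℕ)
    (hapos : ∀ i, 0 < a i) (hacop : ∀ i j, i ≠ j → Nat.Coprime (a i) (a j))
    (q : ℤ) (hq : q = ∏ i, (a i : ℤ))
    (R S : Type*) [CommRing R] [CommRing S]
    (φ : R →+* S) (hφ : Function.Injective φ)
    (α : ℕ → R) (h : ℕ → S)
    (hmul : ∀ i j, i + j ≤ n → h i * h j = h (i + j))
    (hφα : ∀ i, i ≤ n → φ (α i) = q • h i)
    (ev : R →+ ℤ) (hev : ev (α n) = 1) :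
    ev (α 1 ^ n) = q ^ (n - 1) := by
  have hpow : ∀ k, 1 ≤ k → k ≤ n → h 1 ^ k = h k := by
    intro k hk1 hkn
    induction k with
    | zero => omega
    | succ m ih =>
      rcases Nat.eq_or_lt_of_le hk1 with h1 | h1
      · simp [← h1]
      · have hm1 : 1 ≤ m := by omega
        have hmn : m ≤ n := by omega
        rw [pow_succ, ih hm1 hmn, hmul m 1 hkn]
  have key : α 1 ^ n = q ^ (n - 1) • α n := by
    apply hφ
    rw [map_pow, map_zsmul, hφα 1 hn, hφα n le_rfl, smul_pow,
      hpow n hn le_rfl, smul_smul]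
    congr 1
    rw [← pow_succ]
    congr 1
    omega
  rw [key, map_zsmul, hev, smul_eq_mul, mul_one]
end
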